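/- For any symmetric recurrent aperiodic random walk in Z^2, for every integer a ≥ 0 and every integer k ≥ 1, P(T_a ≥ k) ≤ 2·g(a)/g(k-1). -/

import Mathlib

open MeasureTheory Filter Real

noncomputable section

variable {Ω : Type} [MeasurableSpace Ω]

/-- Position of the walk with steps `X` at time `n`. -/
def walk2 (X : ℕ → Ω → ℤ × ℤ) (n : ℕ) (ω : Ω) : ℤ × ℤ :=
  ∑ i ∈ Finset.range n, X i ω

/-- `X` is the step sequence of a symmetric recurrent aperiodic random walk on `ℤ²`:
i.i.d. steps, symmetric law, the walk returns to the origin infinitely often a.s.,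
and the steps are not supported on a proper subgroup of `ℤ²`. -/
def IsSymRecAperiodic2 (P : Measure Ω) (X : ℕ → Ω → ℤ × ℤ) : Prop :=
  (∀ n, Measurable (X n)) ∧
  ProbabilityTheory.iIndepFun X P ∧
  (∀ n v, P {ω | X n ω = v} = P {ω | X 0 ω = v}) ∧
  (∀ v, P {ω | X 0 ω = v} = P {ω | X 0 ω = -v}) ∧
  (P {ω | ∀ m : ℕ, ∃ n > m, walk2 X n ω = 0} = 1) ∧
  (∀ G : AddSubgroup (ℤ × ℤ), (∀ v, P {ω | X 0 ω = v} ≠ 0 → v ∈ G) → G = ⊤)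

/-- `T_a = min{j > 0 : S_{a+j} = 0}`. -/
def hitTimeAfter (X : ℕ → Ω → ℤ × ℤ) (a : ℕ) (ω : Ω) : ℕ :=
  sInf {j | 0 < j ∧ walk2 X (a + j) ω = 0}

/-- The truncated Green function `g(n) = Σ_{k=0}^n P_k(0,0)`. -/
def green (P : Measure Ω) (X : ℕ → Ω → ℤ × ℤ) (n : ℕ) : ℝ :=
  ∑ k ∈ Finset.range (n + 1), (P {ω | walk2 X k ω = 0}).toReal

/-!
Let `q = P(1 ≤ T_a ≤ n)`. Splitting the event `S_{a+j} = 0` (`j ≥ 1`) according to the first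
return time `T_a = i ≤ j` and using the independence of the increments of the walk after time
`a + i` gives the renewal identity `P(S_{a+j} = 0) = ∑_{i=1}^j P(T_a = i) P(S_{j-i} = 0)`.
Summing over `1 ≤ j ≤ n` yields `g(n) ≤ g(a) + ∑_{j=1}^n P(S_{a+j} = 0) ≤ g(a) + q g(n)`, hence
`P(T_a ≥ k) ≤ 1 - q ≤ g(a) / g(k - 1)` for `n = k - 1`, since `g(n) ≥ P(S_0 = 0) = 1`.
-/

namespace RandomWalk2

open Finset ProbabilityTheory

section Renewal

variable {R : Type*} [CommSemiring R] [PartialOrder R] [IsOrderedRing R]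

lemma sum_Icc_sum_Icc_mul_le {f g : ℕ → R} (hf : 0 ≤ f) (hg : 0 ≤ g) (n : ℕ) :
    ∑ j ∈ Icc 1 n, ∑ i ∈ Icc 1 j, f i * g (j - i) ≤
      (∑ i ∈ Icc 1 n, f i) * ∑ r ∈ range (n + 1), g r := by
  rw [Finset.sum_comm' (t' := Icc 1 n) (s' := fun i => Icc i n)
    (fun j i => by simp only [mem_Icc]; omega), sum_mul]
  refine sum_le_sum fun i hi => ?_
  rw [← mul_sum, ← Ico_add_one_right_eq_Icc, sum_Ico_eq_sum_range]
  simp only [Nat.add_sub_cancel_left]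
  exact mul_le_mul_of_nonneg_left
    (sum_le_sum_of_subset_of_nonneg (range_subset_range.2 (by omega)) fun r _ _ => hg r) (hf i)

lemma sum_range_le_add_sum_Icc {g : ℕ → R} (hg : 0 ≤ g) (a n : ℕ) :
    ∑ r ∈ range (n + 1), g r ≤ ∑ r ∈ range (a + 1), g r + ∑ j ∈ Icc 1 n, g (a + j) := by
  calc ∑ r ∈ range (n + 1), g r ≤ ∑ r ∈ range (a + 1 + n), g r :=
        sum_le_sum_of_subset_of_nonneg (range_subset_range.2 (by omega)) fun r _ _ => hg r
    _ = ∑ r ∈ range (a + 1), g r + ∑ j ∈ Icc 1 n, g (a + j) := by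
      rw [sum_range_add, ← Ico_add_one_right_eq_Icc, sum_Ico_eq_sum_range, Nat.add_sub_cancel]
      simp only [add_assoc, add_comm 1]

lemma sum_range_le_of_renewal {μ f : ℕ → R} (hμ : 0 ≤ μ) (hf : 0 ≤ f) {a : ℕ}
    (h : ∀ j, 0 < j → μ (a + j) = ∑ i ∈ Icc 1 j, f i * μ (j - i)) (n : ℕ) :
    ∑ r ∈ range (n + 1), μ r ≤
      ∑ r ∈ range (a + 1), μ r + (∑ i ∈ Icc 1 n, f i) * ∑ r ∈ range (n + 1), μ r := by
  calc ∑ r ∈ range (n + 1), μ r ≤ ∑ r ∈ range (a + 1), μ r + ∑ j ∈ Icc 1 n, μ (a + j) :=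
        sum_range_le_add_sum_Icc hμ a n
    _ = ∑ r ∈ range (a + 1), μ r + ∑ j ∈ Icc 1 n, ∑ i ∈ Icc 1 j, f i * μ (j - i) := by
      congr 1
      exact sum_congr rfl fun j hj => h j (by simp only [mem_Icc] at hj; omega)
    _ ≤ _ := add_le_add_right (sum_Icc_sum_Icc_mul_le hf hμ n) _

end Renewal

section Hitting

variable {α : Type} {X : ℕ → α → ℤ × ℤ}

lemma walk2_add (X : ℕ → α → ℤ × ℤ) (N s : ℕ) (ω : α) :
    walk2 X (N + s) ω = walk2 X N ω + walk2 (fun n => X (N + n)) s ω :=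
  sum_range_add _ _ _

lemma hitTimeAfter_eq_iff {a i : ℕ} (hi : 0 < i) (ω : α) :
    hitTimeAfter X a ω = i ↔
      walk2 X (a + i) ω = 0 ∧ ∀ j, 0 < j → j < i → walk2 X (a + j) ω ≠ 0 := by
  set S := {j | 0 < j ∧ walk2 X (a + j) ω = 0}
  have hleast : hitTimeAfter X a ω = i ↔ IsLeast S i := by
    refine ⟨fun h => ?_, fun h => h.csInf_eq⟩
    subst h
    exact ⟨Nat.sInf_mem (Nat.nonempty_of_pos_sInf hi), fun j hj => Nat.sInf_le hj⟩
  rw [hleast, IsLeast, mem_lowerBounds]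
  refine ⟨fun ⟨⟨_, hi0⟩, hmin⟩ => ⟨hi0, fun j hj hji hj0 => ?_⟩,
    fun ⟨hi0, hmin⟩ => ⟨⟨hi, hi0⟩, fun j ⟨hj, hj0⟩ => ?_⟩⟩
  · exact (hmin j ⟨hj, hj0⟩).not_gt hji
  · exact not_lt.1 fun hji => hmin j hj hji hj0

lemma hitTimeAfter_mem_Icc {a j : ℕ} {ω : α} (hj : 0 < j) (h : walk2 X (a + j) ω = 0) :
    hitTimeAfter X a ω ∈ Icc 1 j :=
  have hmem : j ∈ {j | 0 < j ∧ walk2 X (a + j) ω = 0} := ⟨hj, h⟩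
  mem_Icc.2 ⟨(Nat.sInf_mem ⟨j, hmem⟩).1, Nat.sInf_le hmem⟩

abbrev sigmaSteps (X : ℕ → α → ℤ × ℤ) (s : Set ℕ) : MeasurableSpace α :=
  ⨆ i ∈ s, MeasurableSpace.comap (X i) inferInstance

lemma measurable_sigmaSteps {s : Set ℕ} {i : ℕ} (hi : i ∈ s) :
    Measurable[sigmaSteps X s] (X i) :=
  (comap_measurable (X i)).mono
    (le_iSup₂ (f := fun i (_ : i ∈ s) => MeasurableSpace.comap (X i) inferInstance) i hi) le_rfl

lemma sigmaSteps_le [MeasurableSpace α] (hm : ∀ n, Measurable (X n)) (s : Set ℕ) :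
    sigmaSteps X s ≤ ‹MeasurableSpace α› :=
  iSup₂_le fun i _ => (hm i).comap_le

lemma measurable_walk2_of_lt {m : MeasurableSpace α} {n : ℕ}
    (hX : ∀ i < n, Measurable[m] (X i)) : Measurable[m] (walk2 X n) :=
  Finset.measurable_sum _ fun i hi => hX i (mem_range.1 hi)

lemma measurableSet_hitTimeAfter_eq (a : ℕ) {i : ℕ} (hi : 0 < i) :
    MeasurableSet[sigmaSteps X (Set.Iio (a + i))] {ω : α | hitTimeAfter X a ω = i} := by
  have hwalk : ∀ j ≤ i, MeasurableSet[sigmaSteps X (Set.Iio (a + i))]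
      {ω | walk2 X (a + j) ω = 0} := fun j hj =>
    measurable_walk2_of_lt (fun l hl => measurable_sigmaSteps (Set.mem_Iio.2 (by omega)))
      (measurableSet_singleton 0)
  simp_rw [hitTimeAfter_eq_iff hi, Set.ofPred_and, Set.ofPred_forall]
  exact (hwalk i le_rfl).inter <| .iInter fun j => .iInter fun _ => .iInter fun hji =>
    (hwalk j hji.le).compl

end Hitting

section Independence

variable {P : Measure Ω} {X : ℕ → Ω → ℤ × ℤ}

lemma indep_sigmaSteps_Iio_Ici (hm : ∀ n, Measurable (X n)) (hind : iIndepFun X P) (N : ℕ) :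
    Indep (sigmaSteps X (Set.Iio N)) (sigmaSteps X (Set.Ici N)) P :=
  indep_iSup_of_disjoint (fun i => (hm i).comap_le) hind (Set.Iio_disjoint_Ici le_rfl)

lemma map_walk2_eq {Y : ℕ → Ω → ℤ × ℤ} (hmX : ∀ n, Measurable (X n))
    (hmY : ∀ n, Measurable (Y n)) (hX : iIndepFun X P) (hY : iIndepFun Y P)
    (hXY : ∀ n, P.map (X n) = P.map (Y n)) (s : ℕ) :
    P.map (walk2 X s) = P.map (walk2 Y s) := by
  have hsum : Measurable fun f : Fin s → ℤ × ℤ => ∑ i, f i :=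
    Finset.univ.measurable_sum fun i _ => measurable_pi_apply i
  have hwalk : ∀ Z : ℕ → Ω → ℤ × ℤ,
      walk2 Z s = (fun f : Fin s → ℤ × ℤ => ∑ i, f i) ∘ fun ω (i : Fin s) => Z i ω :=
    fun Z => funext fun ω => (Fin.sum_univ_eq_sum_range (Z · ω) s).symm
  have hlaw : ∀ Z : ℕ → Ω → ℤ × ℤ, (∀ n, Measurable (Z n)) → iIndepFun Z P →
      P.map (walk2 Z s) = (Measure.pi fun i : Fin s => P.map (Z i)).map fun f => ∑ i, f i := by
    intro Z hmZ hZ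
    rw [hwalk, ← Measure.map_map hsum (measurable_pi_lambda _ fun i => hmZ i),
      (hZ.precomp Fin.val_injective).map_fun_eq_pi_map (f := fun (i : Fin s) => Z i)
        fun i => (hmZ i).aemeasurable]
  simp only [hlaw X hmX hX, hlaw Y hmY hY, hXY]

/-- On `{T_a = i}` the walk is at `0` at time `a + i`, so `S_{a+i+s}` is the increment after that
time: it is independent of the steps before it, and distributed as `S_s`. -/
lemma measure_hitTimeAfter_eq_inter_walk2_eq_zero (hm : ∀ n, Measurable (X n))
    (hind : iIndepFun X P) (hident : ∀ n, P.map (X n) = P.map (X 0)) (a : ℕ) {i : ℕ}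
    (hi : 0 < i) (s : ℕ) :
    P ({ω | hitTimeAfter X a ω = i} ∩ {ω | walk2 X (a + i + s) ω = 0}) =
      P {ω | hitTimeAfter X a ω = i} * P {ω | walk2 X s ω = 0} := by
  set Y : ℕ → Ω → ℤ × ℤ := fun n => X (a + i + n)
  have hset : {ω | hitTimeAfter X a ω = i} ∩ {ω | walk2 X (a + i + s) ω = 0} =
      {ω | hitTimeAfter X a ω = i} ∩ {ω | walk2 Y s ω = 0} := by
    ext ω
    simp only [Set.mem_inter_iff, Set.mem_ofPred_eq, walk2_add X (a + i) s ω, and_congr_right_iff]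
    intro hT
    rw [((hitTimeAfter_eq_iff hi ω).1 hT).1, zero_add]
  have hYfuture : Measurable[sigmaSteps X (Set.Ici (a + i))] (walk2 Y s) :=
    measurable_walk2_of_lt fun n _ => measurable_sigmaSteps (Set.mem_Ici.2 (Nat.le_add_right _ n))
  have hlaw : P.map (walk2 Y s) = P.map (walk2 X s) :=
    map_walk2_eq (fun n => hm _) hm (hind.precomp (add_right_injective (a + i))) hind
      (fun n => (hident _).trans (hident n).symm) s
  rw [hset, (Indep_iff _ _ _).1 (indep_sigmaSteps_Iio_Ici hm hind (a + i)) _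
    {ω | walk2 Y s ω = 0} (measurableSet_hitTimeAfter_eq a hi)
    (hYfuture (measurableSet_singleton 0))]
  congr 1
  have hmeas : ∀ Z : ℕ → Ω → ℤ × ℤ, (∀ n, Measurable (Z n)) →
      P {ω | walk2 Z s ω = 0} = P.map (walk2 Z s) {0} := fun Z hZ =>
    (Measure.map_apply (measurable_walk2_of_lt fun n _ => hZ n) (measurableSet_singleton 0)).symm
  rw [hmeas Y (fun n => hm _), hlaw, hmeas X hm]

lemma measureReal_walk2_eq_zero_eq_sum (hm : ∀ n, Measurable (X n)) (hind : iIndepFun X P)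
    (hident : ∀ n, P.map (X n) = P.map (X 0)) (a : ℕ) {j : ℕ} (hj : 0 < j) :
    P.real {ω | walk2 X (a + j) ω = 0} =
      ∑ i ∈ Icc 1 j, P.real {ω | hitTimeAfter X a ω = i} * P.real {ω | walk2 X (j - i) ω = 0} := by
  have := hind.isProbabilityMeasure
  have hunion : {ω | walk2 X (a + j) ω = 0} =
      ⋃ i ∈ Icc 1 j, {ω | hitTimeAfter X a ω = i} ∩ {ω | walk2 X (a + j) ω = 0} := by
    ext ω
    simp only [Set.mem_ofPred_eq, Set.mem_iUnion, Set.mem_inter_iff, exists_prop]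
    exact ⟨fun h => ⟨_, hitTimeAfter_mem_Icc hj h, rfl, h⟩, fun ⟨_, _, _, h⟩ => h⟩
  have hmeas : ∀ i ∈ Icc 1 j,
      MeasurableSet ({ω | hitTimeAfter X a ω = i} ∩ {ω | walk2 X (a + j) ω = 0}) := fun i hi =>
    (sigmaSteps_le hm _ _ (measurableSet_hitTimeAfter_eq a (mem_Icc.1 hi).1)).inter
      (measurable_walk2_of_lt (fun n _ => hm n) (measurableSet_singleton 0))
  rw [hunion, measureReal_biUnion_finset
    (fun i _ i' _ hii' => Set.disjoint_left.2 fun ω h h' => hii' (h.1.symm.trans h'.1)) hmeas]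
  refine sum_congr rfl fun i hi => ?_
  obtain ⟨hi1, hij⟩ := mem_Icc.1 hi
  simp only [measureReal_def, ← ENNReal.toReal_mul]
  rw [← measure_hitTimeAfter_eq_inter_walk2_eq_zero hm hind hident a hi1 (j - i),
    show a + i + (j - i) = a + j by omega]

lemma one_le_green [IsProbabilityMeasure P] (X : ℕ → Ω → ℤ × ℤ) (n : ℕ) : 1 ≤ green P X n := by
  have hzero : P.real {ω | walk2 X 0 ω = 0} = 1 := by simp [walk2]
  calc (1 : ℝ) = P.real {ω | walk2 X 0 ω = 0} := hzero.symm
    _ ≤ green P X n :=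
      single_le_sum (f := fun k => P.real {ω | walk2 X k ω = 0}) (fun k _ => measureReal_nonneg)
        (mem_range.2 n.succ_pos)

theorem measureReal_hitTimeAfter_notMem_Icc_le [IsProbabilityMeasure P]
    (hm : ∀ n, Measurable (X n)) (hind : iIndepFun X P)
    (hident : ∀ n, P.map (X n) = P.map (X 0)) (a n : ℕ) :
    P.real {ω | hitTimeAfter X a ω ∉ Icc 1 n} ≤ green P X a / green P X n := by
  have hmeas : ∀ i ∈ Icc 1 n, MeasurableSet (hitTimeAfter X a ⁻¹' {i}) := fun i hi =>
    sigmaSteps_le hm _ _ (measurableSet_hitTimeAfter_eq a (mem_Icc.1 hi).1)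
  set q := P.real (hitTimeAfter X a ⁻¹' ↑(Icc 1 n))
  have hq : ∑ i ∈ Icc 1 n, P.real {ω | hitTimeAfter X a ω = i} = q :=
    sum_measureReal_preimage_singleton _ hmeas
  have hcompl : P.real {ω | hitTimeAfter X a ω ∉ Icc 1 n} = 1 - q :=
    probReal_compl_eq_one_sub (s := hitTimeAfter X a ⁻¹' ↑(Icc 1 n)) <| by
      rw [← Finset.set_biUnion_preimage_singleton]
      exact Finset.measurableSet_biUnion _ hmeas
  have hrenewal : green P X n ≤ green P X a + q * green P X n := by
    rw [← hq]
    exact sum_range_le_of_renewal (fun _ => measureReal_nonneg) (fun _ => measureReal_nonneg)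
      (fun j hj => measureReal_walk2_eq_zero_eq_sum hm hind hident a hj) n
  have hq1 : 0 ≤ q := measureReal_nonneg
  have hgreen := one_le_green (P := P) X n
  rw [hcompl, le_div_iff₀ (by linarith)]
  nlinarith

end Independence

end RandomWalk2

open RandomWalk2 Finset in
theorem statement10_general (P : Measure Ω) [IsProbabilityMeasure P]
    (X : ℕ → Ω → ℤ × ℤ) (hX : IsSymRecAperiodic2 P X)
    (a k : ℕ) :
    (P {ω | k ≤ hitTimeAfter X a ω}).toReal ≤ 2 * green P X a / green P X (k - 1) := by
  obtain ⟨hm, hind, hident, -, -, -⟩ := hX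
  have hlaw : ∀ n, P.map (X n) = P.map (X 0) := fun n => Measure.ext_of_singleton fun v => by
    rw [Measure.map_apply (hm n) (measurableSet_singleton v),
      Measure.map_apply (hm 0) (measurableSet_singleton v)]
    exact hident n v
  calc P.real {ω | k ≤ hitTimeAfter X a ω}
      ≤ P.real {ω | hitTimeAfter X a ω ∉ Icc 1 (k - 1)} :=
        measureReal_mono fun ω hk hmem => by
          simp only [Set.mem_ofPred_eq, mem_Icc] at hk hmem; omega
    _ ≤ green P X a / green P X (k - 1) :=
        measureReal_hitTimeAfter_notMem_Icc_le hm hind hlaw a (k - 1)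
    _ ≤ 2 * green P X a / green P X (k - 1) := by
        have := one_le_green (P := P) X a
        have := one_le_green (P := P) X (k - 1)
        gcongr
        linarith

theorem statement10 (P : Measure Ω) [IsProbabilityMeasure P]
    (X : ℕ → Ω → ℤ × ℤ) (hX : IsSymRecAperiodic2 P X)
    (a k : ℕ) (hk : 1 ≤ k) :
    (P {ω | k ≤ hitTimeAfter X a ω}).toReal ≤ 2 * green P X a / green P X (k - 1) :=
  statement10_general P X hX a k
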